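/- Let ℂ : Sym₃ → Sym₃ be an elasticity tensor that is coercive with constant c > 0, let Z̄ ∈ Sym₂ (identified with an element of Sym₃ with vanishing third row and column), and let G ∈ ℝ³. Then there is a unique z ∈ ℝ³ such that (ℂ(Z̄ + z⊙e₃))_{i3} = G_i for i = 1,2,3, namely z_j = (𝕔⁻¹)_{ji}( G_i − (ℂZ̄)_{i3} ); moreover, for this z and all α,β ∈ {1,2}, (ℂ(Z̄ + z⊙e₃))_{αβ} = (C̄Z̄)_{αβ} + 𝕗_{αβ}, where 𝕗_{αβ} := ℂ_{αβj3}(𝕔⁻¹)_{ji}G_i. -/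
import Mathlib


open Matrix
open scoped BigOperators

noncomputable section

/-- The space of real 3×3 matrices; symmetric ones form `Sym₃`. -/
abbrev M3 : Type := Matrix (Fin 3) (Fin 3) ℝ

/-- The Frobenius pairing `A·B := tr (A*B)`. -/
def dot3 (A B : M3) : ℝ := (A * B).trace

/-- The standard basis vector `e i` of `ℝ³`. -/
def bv (i : Fin 3) : Fin 3 → ℝ := Pi.single i 1

/-- The symmetrized tensor product `a ⊙ b := (1/2)(a⊗b + b⊗a)`. -/
def symOd (a b : Fin 3 → ℝ) : M3 := Matrix.of fun i j => (a i * b j + b i * a j) / 2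

/-- `b ⊙ e₃`. -/
def od3 (b : Fin 3 → ℝ) : M3 := symOd b (bv 2)

/-- Components `ℂ_{ijkl} := ℂ(e_k⊙e_l)·(e_i⊙e_j)` of the elasticity tensor. -/
def Ccomp (C : M3 →ₗ[ℝ] M3) (i j k l : Fin 3) : ℝ :=
  dot3 (C (symOd (bv k) (bv l))) (symOd (bv i) (bv j))

/-- The matrix `𝕔` with `𝕔_{ij} := ℂ_{i3j3}`. -/
def cmat (C : M3 →ₗ[ℝ] M3) : M3 := Matrix.of fun i j => Ccomp C i 2 j 2

/-- Components `C̄_{αβγδ} := ℂ_{αβγδ} − ℂ_{αβj3}(𝕔⁻¹)_{ji}ℂ_{i3γδ}` of the reduced tensor. -/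
def cbar (C : M3 →ₗ[ℝ] M3) (α β γ δ : Fin 3) : ℝ :=
  Ccomp C α β γ δ
    - ∑ j : Fin 3, ∑ i : Fin 3, Ccomp C α β j 2 * (cmat C)⁻¹ j i * Ccomp C i 2 γ δ

/-- `A` has vanishing third row and column (identification of `Sym₂` inside `Sym₃`). -/
def planar (A : M3) : Prop := ∀ i : Fin 3, A i 2 = 0 ∧ A 2 i = 0

/-- `z_j := (𝕔⁻¹)_{ji}( G_i − (ℂZ̄)_{i3} )`. -/
def zf (C : M3 →ₗ[ℝ] M3) (Z : M3) (G : Fin 3 → ℝ) : Fin 3 → ℝ :=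
  fun j => ∑ i : Fin 3, (cmat C)⁻¹ j i * (G i - (C Z) i 2)

/-- `𝕗_{αβ} := ℂ_{αβj3}(𝕔⁻¹)_{ji}G_i`. -/
def fmat (C : M3 →ₗ[ℝ] M3) (G : Fin 3 → ℝ) (α β : Fin 3) : ℝ :=
  ∑ j : Fin 3, ∑ i : Fin 3, Ccomp C α β j 2 * (cmat C)⁻¹ j i * G i

lemma symOd_isSymm (a b : Fin 3 → ℝ) : (symOd a b).IsSymm := by
  ext i j; simp [Matrix.transpose_apply, symOd]; ring

lemma od3_isSymm (v : Fin 3 → ℝ) : (od3 v).IsSymm := symOd_isSymm _ _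

lemma dot3_symOd (S : M3) (i j : Fin 3) :
    dot3 S (symOd (bv i) (bv j)) = (S j i + S i j) / 2 := by
  simp only [dot3, Matrix.trace, Matrix.diag, Matrix.mul_apply, symOd, bv,
    Matrix.of_apply, Fin.sum_univ_three, Pi.single_apply]
  fin_cases i <;> fin_cases j <;> simp <;> ring

lemma dot3_symOd' (S : M3) (hS : S.IsSymm) (i j : Fin 3) :
    dot3 S (symOd (bv i) (bv j)) = S i j := by
  rw [dot3_symOd, hS.apply]; ring

lemma decomp (X : M3) (hX : X.IsSymm) :
    X = ∑ k : Fin 3, ∑ l : Fin 3, X k l • symOd (bv k) (bv l) := by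
  have h01 := hX.apply 0 1
  have h02 := hX.apply 0 2
  have h12 := hX.apply 1 2
  ext i j
  simp only [Matrix.sum_apply, Matrix.smul_apply, symOd, bv, Matrix.of_apply,
    Fin.sum_univ_three, Pi.single_apply, smul_eq_mul]
  fin_cases i <;> fin_cases j <;> simp <;> linarith

lemma CX_entry (C : M3 →ₗ[ℝ] M3) (hCsymm : ∀ A : M3, A.IsSymm → (C A).IsSymm)
    (X : M3) (hX : X.IsSymm) (i j : Fin 3) :
    (C X) i j = ∑ k : Fin 3, ∑ l : Fin 3, X k l * Ccomp C i j k l := by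
  conv_lhs => rw [decomp X hX]
  rw [map_sum]
  simp only [map_sum, LinearMap.map_smul, Matrix.sum_apply, Matrix.smul_apply, smul_eq_mul]
  refine Finset.sum_congr rfl fun k _ => Finset.sum_congr rfl fun l _ => ?_
  rw [← dot3_symOd' (C (symOd (bv k) (bv l))) (hCsymm _ (symOd_isSymm _ _)) i j]
  rfl

lemma od3_eq_sum (v : Fin 3 → ℝ) : od3 v = ∑ k : Fin 3, v k • symOd (bv k) (bv 2) := by
  ext i j
  simp only [od3, symOd, bv, Matrix.of_apply, Matrix.sum_apply, Matrix.smul_apply,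
    Fin.sum_univ_three, Pi.single_apply, smul_eq_mul]
  fin_cases i <;> fin_cases j <;> simp <;> ring

lemma key_entry (C : M3 →ₗ[ℝ] M3) (hCsymm : ∀ A : M3, A.IsSymm → (C A).IsSymm)
    (Zb : M3) (hZs : Zb.IsSymm) (z : Fin 3 → ℝ) (i j : Fin 3) :
    (C (Zb + od3 z)) i j = (C Zb) i j + ∑ k : Fin 3, Ccomp C i j k 2 * z k := by
  rw [map_add, Matrix.add_apply, od3_eq_sum, map_sum]
  simp only [LinearMap.map_smul, Matrix.sum_apply, Matrix.smul_apply, smul_eq_mul]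
  congr 1
  refine Finset.sum_congr rfl fun k _ => ?_
  rw [← dot3_symOd' (C (symOd (bv k) (bv 2))) (hCsymm _ (symOd_isSymm _ _)) i j]
  rw [mul_comm]; rfl

lemma dot3_od3 (S : M3) (hS : S.IsSymm) (v : Fin 3 → ℝ) :
    dot3 S (od3 v) = ∑ k : Fin 3, v k * S k 2 := by
  rw [od3_eq_sum]
  simp only [dot3, Matrix.mul_sum, Matrix.mul_smul, trace_sum, trace_smul, smul_eq_mul]
  refine Finset.sum_congr rfl fun k _ => ?_
  rw [show (S * symOd (bv k) (bv 2)).trace = dot3 S (symOd (bv k) (bv 2)) from rfl,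
    dot3_symOd' S hS]

lemma dot3_od3_self (v : Fin 3 → ℝ) :
    dot3 (od3 v) (od3 v) = (v 0)^2 / 2 + (v 1)^2 / 2 + (v 2)^2 := by
  simp only [dot3, Matrix.trace, Matrix.diag, Matrix.mul_apply, od3, symOd, bv,
    Matrix.of_apply, Fin.sum_univ_three, Pi.single_apply]
  norm_num [Fin.ext_iff]; ring

/-- Let `ℂ` be an elasticity tensor, coercive with constant `c > 0`, let
`Z̄ ∈ Sym₂` and `G ∈ ℝ³`.  Then there is a unique `z ∈ ℝ³` such that
`(ℂ(Z̄ + z⊙e₃))_{i3} = G_i` for all `i`, namely `z_j = (𝕔⁻¹)_{ji}(G_i − (ℂZ̄)_{i3})`;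
moreover for this `z` and all Greek indices `α, β`,
`(ℂ(Z̄ + z⊙e₃))_{αβ} = (C̄Z̄)_{αβ} + 𝕗_{αβ}` with `𝕗_{αβ} = ℂ_{αβj3}(𝕔⁻¹)_{ji}G_i`. -/
theorem unique_z_and_inplane_stress
    (C : M3 →ₗ[ℝ] M3) (c : ℝ) (hc : 0 < c)
    (hCsymm : ∀ A : M3, A.IsSymm → (C A).IsSymm)
    (hCsa : ∀ A B : M3, A.IsSymm → B.IsSymm → dot3 (C A) B = dot3 A (C B))
    (hCcoer : ∀ A : M3, A.IsSymm → c * dot3 A A ≤ dot3 (C A) A)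
    (Zb : M3) (hZs : Zb.IsSymm) (hZp : planar Zb) (G : Fin 3 → ℝ) :
    (∀ i : Fin 3, (C (Zb + od3 (zf C Zb G))) i 2 = G i)
    ∧ (∀ z : Fin 3 → ℝ, (∀ i : Fin 3, (C (Zb + od3 z)) i 2 = G i) → z = zf C Zb G)
    ∧ (∀ α β : Fin 3, α ≠ 2 → β ≠ 2 →
        (C (Zb + od3 (zf C Zb G))) α β
          = (∑ γ : Fin 3, ∑ δ : Fin 3, cbar C α β γ δ * Zb γ δ) + fmat C G α β) := by
  -- quadratic form identity
  have hquad : ∀ v : Fin 3 → ℝ,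
      dot3 (C (od3 v)) (od3 v) = ∑ k : Fin 3, v k * (cmat C *ᵥ v) k := by
    intro v
    rw [dot3_od3 _ (hCsymm _ (od3_isSymm v)) v]
    refine Finset.sum_congr rfl fun k _ => ?_
    congr 1
    have h := key_entry C hCsymm 0 Matrix.isSymm_zero v k 2
    rw [zero_add] at h
    rw [h]
    simp [Matrix.mulVec, dotProduct, cmat]
  -- invertibility of cmat
  have hdetne : (cmat C).det ≠ 0 := by
    intro hdet
    obtain ⟨v, hv0, hMv⟩ := Matrix.exists_mulVec_eq_zero_iff.mpr hdet
    have h1 : dot3 (C (od3 v)) (od3 v) = 0 := by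
      rw [hquad v, hMv]; simp
    have h2 := hCcoer (od3 v) (od3_isSymm v)
    have h3 : 0 < dot3 (od3 v) (od3 v) := by
      rw [dot3_od3_self]
      have hv : v 0 ≠ 0 ∨ v 1 ≠ 0 ∨ v 2 ≠ 0 := by
        by_contra h
        push_neg at h
        exact hv0 (funext fun k => by fin_cases k <;> simp [h.1, h.2.1, h.2.2])
      rcases hv with h | h | h <;>
        nlinarith [sq_nonneg (v 0), sq_nonneg (v 1), sq_nonneg (v 2),
          mul_self_pos.mpr h]
    nlinarith
  have hunit : IsUnit (cmat C).det := isUnit_iff_ne_zero.mpr hdetne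
  have hinv_mul : (cmat C)⁻¹ * cmat C = 1 := Matrix.nonsing_inv_mul _ hunit
  have hmul_inv : cmat C * (cmat C)⁻¹ = 1 := Matrix.mul_nonsing_inv _ hunit
  have hzf : zf C Zb G = (cmat C)⁻¹ *ᵥ (fun i => G i - (C Zb) i 2) := by
    funext j
    simp [zf, Matrix.mulVec, dotProduct]
  have hsum_mv : ∀ (z : Fin 3 → ℝ) (i : Fin 3),
      ∑ k : Fin 3, Ccomp C i 2 k 2 * z k = (cmat C *ᵥ z) i := by
    intro z i
    simp [Matrix.mulVec, dotProduct, cmat]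
  have part1 : ∀ i : Fin 3, (C (Zb + od3 (zf C Zb G))) i 2 = G i := by
    intro i
    rw [key_entry C hCsymm Zb hZs, hsum_mv, hzf, Matrix.mulVec_mulVec, hmul_inv,
      Matrix.one_mulVec]
    simp
  refine ⟨part1, ?_, ?_⟩
  · intro z hzeq
    have hmv : cmat C *ᵥ z = fun i => G i - (C Zb) i 2 := by
      funext i
      have h := hzeq i
      rw [key_entry C hCsymm Zb hZs, hsum_mv] at h
      show (cmat C *ᵥ z) i = G i - (C Zb) i 2
      linarith
    calc z = 1 *ᵥ z := (Matrix.one_mulVec z).symm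
      _ = ((cmat C)⁻¹ * cmat C) *ᵥ z := by rw [hinv_mul]
      _ = (cmat C)⁻¹ *ᵥ (cmat C *ᵥ z) := by rw [← Matrix.mulVec_mulVec]
      _ = zf C Zb G := by rw [hmv, hzf]
  · intro α β hα hβ
    have hCZ : ∀ i j : Fin 3, (C Zb) i j = ∑ k : Fin 3, ∑ l : Fin 3, Zb k l * Ccomp C i j k l :=
      fun i j => CX_entry C hCsymm Zb hZs i j
    rw [key_entry C hCsymm Zb hZs, hCZ]
    simp only [zf, hCZ, cbar, fmat, Fin.sum_univ_three]
    ring
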